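/- Let N, M ∈ ℕ and let Λ be a Markov kernel (row-stochastic matrix) from {0,…,N} to {0,…,M} satisfying the intertwining relation L_N Λ = Λ D_M, i.e., for every function f : {0,…,M} → ℝ and every x ∈ {0,…,N}, L_N[Λ[f]](x) = Λ[D_M[f]](x). Then Λ is trivial: Λ(x,·) = δ_0 for every x ∈ {0,…,N}, i.e., Λ(x,0) = 1 and Λ(x,y) = 0 for y ≥ 1. -/
import Mathlib


/-- The Ehrenfest generator `L_N` acting on functions:
`L_N[f](x) = ((N-x)/2)(f(x+1)-f(x)) + (x/2)(f(x-1)-f(x))`. -/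
noncomputable def ehrenfest (N : ℕ) (f : ℕ → ℝ) (x : ℕ) : ℝ :=
  (((N : ℝ) - (x : ℝ)) / 2) * (f (x + 1) - f x) + ((x : ℝ) / 2) * (f (x - 1) - f x)

/-- The Yule (pure-death) generator: `D[f](y) = y (f(y-1) - f(y))`. -/
noncomputable def yule (f : ℕ → ℝ) (y : ℕ) : ℝ :=
  (y : ℝ) * (f (y - 1) - f y)

/-- Any Markov kernel `Λ` from `{0,…,N}` to `{0,…,M}` intertwining the Ehrenfest generator
`L_N` with the Yule generator `D_M` (i.e. `L_N Λ = Λ D_M`) is trivial: every row is the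
Dirac mass at the absorbing point `0`. -/
theorem ehrenfest_yule_intertwining_trivial (N M : ℕ) (Λ : ℕ → ℕ → ℝ)
    (hpos : ∀ x y, x ≤ N → y ≤ M → 0 ≤ Λ x y)
    (hrow : ∀ x, x ≤ N → ∑ y ∈ Finset.range (M + 1), Λ x y = 1)
    (hinter : ∀ f : ℕ → ℝ, ∀ x, x ≤ N →
      ehrenfest N (fun u => ∑ y ∈ Finset.range (M + 1), Λ u y * f y) x =
        ∑ y ∈ Finset.range (M + 1), Λ x y * yule f y) :
    ∀ x, x ≤ N → Λ x 0 = 1 ∧ ∀ y, 1 ≤ y → y ≤ M → Λ x y = 0 := by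
  -- the first moment of each row
  set m : ℕ → ℝ := fun u => ∑ y ∈ Finset.range (M + 1), Λ u y * (y : ℝ) with hm
  -- yule applied to the identity function is -y
  have hyule : ∀ y : ℕ, yule (fun y => (y : ℝ)) y = -(y : ℝ) := by
    intro y
    cases y with
    | zero => simp [yule]
    | succ n =>
        simp only [yule, Nat.succ_sub_one]
        push_cast
        ring
  -- the eigen-equation for m
  have hE : ∀ x, x ≤ N →
      (((N : ℝ) - x) / 2) * (m (x + 1) - m x) + ((x : ℝ) / 2) * (m (x - 1) - m x)
        = -m x := by
    intro x hx
    have h := hinter (fun y => (y : ℝ)) x hx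
    simp only [ehrenfest] at h
    rw [h]
    rw [show -m x = ∑ y ∈ Finset.range (M + 1), Λ x y * (-(y : ℝ)) by
      rw [hm, ← Finset.sum_neg_distrib]
      exact Finset.sum_congr rfl fun y _ => by ring]
    exact Finset.sum_congr rfl fun y _ => by rw [hyule]
  -- nonnegativity of m
  have hmnn : ∀ x, x ≤ N → 0 ≤ m x := by
    intro x hx
    apply Finset.sum_nonneg
    intro y hy
    exact mul_nonneg (hpos x y hx (Nat.lt_succ_iff.mp (Finset.mem_range.mp hy)))
      (Nat.cast_nonneg y)
  -- the key structure: N * m x = (N - 2x) * m 0 for all x ≤ N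
  have key : ∀ x, x ≤ N → (N : ℝ) * m x = ((N : ℝ) - 2 * x) * m 0 := by
    have main : ∀ x, x ≤ N → ((N : ℝ) * m x = ((N : ℝ) - 2 * x) * m 0) ∧
        (x + 1 ≤ N → (N : ℝ) * m (x + 1) = ((N : ℝ) - 2 * (x + 1)) * m 0) := by
      intro x
      induction x with
      | zero =>
        intro _
        constructor
        · push_cast; ring
        · intro h1
          have e0 := hE 0 (Nat.zero_le N)
          simp only [Nat.cast_zero] at e0
          push_cast
          linarith [e0]
      | succ k ih =>
        intro hk
        have hk' : k ≤ N := Nat.le_of_succ_le hk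
        obtain ⟨ih1, ih2⟩ := ih hk'
        have ih2' := ih2 hk
        refine ⟨by push_cast; linarith [ih2'], ?_⟩
        intro hk2
        have e := hE (k + 1) hk
        have hc : ((N : ℝ) - (k + 1)) ≠ 0 := by
          have : (k : ℝ) + 1 < N := by exact_mod_cast Nat.lt_of_succ_le hk2
          linarith
        have hcast : ((k + 1 : ℕ) : ℝ) = (k : ℝ) + 1 := by push_cast; ring
        have hsub : (k + 1) - 1 = k := rfl
        rw [hsub, hcast] at e
        have h2 : ((N : ℝ) - (k + 1)) * ((N : ℝ) * m (k + 1 + 1)) =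
            ((N : ℝ) - (k + 1)) * (((N : ℝ) - 2 * ((k : ℝ) + 1 + 1)) * m 0) := by
          linear_combination (2 * (N : ℝ)) * e + ((N : ℝ) - 2) * ih2' - ((k : ℝ) + 1) * ih1
        have := mul_left_cancel₀ hc h2
        rw [this]
        push_cast; ring
    intro x hx
    exact (main x hx).1
  -- conclude m x = 0 for all x ≤ N
  have hm0 : ∀ x, x ≤ N → m x = 0 := by
    rcases Nat.eq_zero_or_pos N with hN | hN
    · intro x hx
      have hx0 : x = 0 := by omega
      subst hx0
      have e0 := hE 0 (Nat.zero_le N)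
      subst hN
      simp at e0
      linarith
    · have hNpos : (0 : ℝ) < N := by exact_mod_cast hN
      have hmN := key N le_rfl
      have h0 : m 0 = 0 := by
        have h1 : (N : ℝ) * m N = -(N : ℝ) * m 0 := by rw [hmN]; ring
        nlinarith [hmnn N le_rfl, hmnn 0 (Nat.zero_le N)]
      intro x hx
      have := key x hx
      rw [h0, mul_zero] at this
      have := mul_left_cancel₀ (ne_of_gt hNpos) (this.trans (mul_zero (N : ℝ)).symm)
      linarith [this]
  -- finish: each term Λ x y * y is zero
  intro x hx
  have hmx := hm0 x hx
  have hzero : ∀ y ∈ Finset.range (M + 1), Λ x y * (y : ℝ) = 0 := by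
    have := (Finset.sum_eq_zero_iff_of_nonneg (fun y hy =>
      mul_nonneg (hpos x y hx (Nat.lt_succ_iff.mp (Finset.mem_range.mp hy)))
        (Nat.cast_nonneg y))).mp hmx
    exact this
  have hΛ : ∀ y, 1 ≤ y → y ≤ M → Λ x y = 0 := by
    intro y h1 h2
    have hy : y ∈ Finset.range (M + 1) := Finset.mem_range.mpr (Nat.lt_succ_of_le h2)
    have := hzero y hy
    have hyne : (y : ℝ) ≠ 0 := by positivity
    exact (mul_eq_zero.mp this).resolve_right hyne
  refine ⟨?_, hΛ⟩
  have hr := hrow x hx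
  rw [Finset.sum_range_succ'] at hr
  rw [Finset.sum_eq_zero (fun i hi => hΛ (i + 1) (Nat.le_add_left 1 i)
    (Nat.lt_succ_iff.mp ?_))] at hr
  · linarith
  · exact Nat.succ_lt_succ (Finset.mem_range.mp hi)
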